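/- arXiv:2010.02873 — 2 statements merged into one kernel-verified Lean document; each statement's English description precedes it below -/
import Mathlib

section
/- There is no complex solution (I31, I22, I50) with I22 ≠ 0 of the system consisting of: (F42) 0 = -48*I31^2 + 12*I31*I50 + 9*I22 - 20*I31, and (F53) 0 = -I31*(-16*I31^2 + 4*I31*I50 + 3*I22 - 6*I31)*(-32*I31^2 + 8*I31*I50 + 6*I22 - 13*I31). More precisely, if I22 ≠ 0 then (F42) gives I22 = (16/3)*I31^2 - (4/3)*I50*I31 + (20/9)*I31, and substituting into (F53) yields -(9/2)*I31^3 = 0, hence I31 = 0 and then I22 = 0, a contradiction. -/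
theorem no_solution_with_I22_ne_zero :
    (¬ ∃ I31 I22 I50 : ℂ, I22 ≠ 0 ∧
      0 = -48 * I31 ^ 2 + 12 * I31 * I50 + 9 * I22 - 20 * I31 ∧
      0 = -I31 * (-16 * I31 ^ 2 + 4 * I31 * I50 + 3 * I22 - 6 * I31) *
            (-32 * I31 ^ 2 + 8 * I31 * I50 + 6 * I22 - 13 * I31)) ∧
    ∀ I31 I22 I50 : ℂ, I22 ≠ 0 →
      (0 = -48 * I31 ^ 2 + 12 * I31 * I50 + 9 * I22 - 20 * I31 →
        I22 = (16 / 3) * I31 ^ 2 - (4 / 3) * I50 * I31 + (20 / 9) * I31) := by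
  constructor
  · rintro ⟨I31, I22, I50, h22, h1, h2⟩
    have hcube : I31 ^ 3 = 0 := by
      linear_combination ((5/2) * I31 ^ 2 + I31 * (-48 * I31 ^ 2 + 12 * I31 * I50 + 9 * I22 - 20 * I31)) * h1 + (9/2) * h2
    have h31 : I31 = 0 := by
      exact pow_eq_zero_iff (by norm_num) |>.mp hcube
    apply h22
    have : (9:ℂ) * I22 = 0 := by rw [h31] at h1; linear_combination -h1
    field_simp at this
    simpa using this
  · intro I31 I22 I50 _ h1
    linear_combination (-1/9 : ℂ) * h1
end

section
/- Define holomorphic vector fields on C^3 (coordinates x, y, u) by e1 = ∂x - (x/2)∂y + y∂u, e2 = ∂y + x∂u, e3 = x∂x + 2y∂y + 3u∂u. Then [e1,e2] = 0, [e1,e3] = e1, [e2,e3] = 2*e2, and each of e1, e2, e3 is tangent to the Cayley cubic surface {u = x*y + x^3/6}, i.e. applying each vector field to the function u - x*y - x^3/6 yields a function vanishing on that surface. -/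
/-- Lie bracket of vector fields on ℂ³, viewed as smooth maps ℂ³ → ℂ³:
`[V,W](p) = DW(p)(V(p)) - DV(p)(W(p))`. -/
noncomputable def lieBracket (V W : ℂ × ℂ × ℂ → ℂ × ℂ × ℂ) :
    ℂ × ℂ × ℂ → ℂ × ℂ × ℂ :=
  fun p => fderiv ℂ W p (V p) - fderiv ℂ V p (W p)

/-- `e1 = ∂x - (x/2)∂y + y∂u`. -/
noncomputable def e1 : ℂ × ℂ × ℂ → ℂ × ℂ × ℂ := fun p => (1, -p.1 / 2, p.2.1)

/-- `e2 = ∂y + x∂u`. -/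
noncomputable def e2 : ℂ × ℂ × ℂ → ℂ × ℂ × ℂ := fun p => (0, 1, p.1)

/-- `e3 = x∂x + 2y∂y + 3u∂u`. -/
noncomputable def e3 : ℂ × ℂ × ℂ → ℂ × ℂ × ℂ := fun p => (p.1, 2 * p.2.1, 3 * p.2.2)

/-- Tangency of a vector field `a∂x + b∂y + c∂u` to the graph
`{u = x*y + x^3/6}` (the Cayley cubic): `c - a*F_x - b*F_y = 0` on the graph,
where `F_x = y + x^2/2` and `F_y = x`. -/
def tangentToCayley (e : ℂ × ℂ × ℂ → ℂ × ℂ × ℂ) : Prop :=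
  ∀ p : ℂ × ℂ × ℂ, p.2.2 = p.1 * p.2.1 + p.1 ^ 3 / 6 →
    (e p).2.2 - (e p).1 * (p.2.1 + p.1 ^ 2 / 2) - (e p).2.1 * p.1 = 0

open ContinuousLinearMap in
noncomputable def Lx : ℂ × ℂ × ℂ →L[ℂ] ℂ := fst ℂ ℂ (ℂ × ℂ)
open ContinuousLinearMap in
noncomputable def Ly : ℂ × ℂ × ℂ →L[ℂ] ℂ := (fst ℂ ℂ ℂ).comp (snd ℂ ℂ (ℂ × ℂ))
open ContinuousLinearMap in
noncomputable def Lu : ℂ × ℂ × ℂ →L[ℂ] ℂ := (snd ℂ ℂ ℂ).comp (snd ℂ ℂ (ℂ × ℂ))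

lemma hx : ∀ p : ℂ × ℂ × ℂ, HasFDerivAt (fun q : ℂ × ℂ × ℂ => q.1) Lx p :=
  fun _ => hasFDerivAt_fst
lemma hy : ∀ p : ℂ × ℂ × ℂ, HasFDerivAt (fun q : ℂ × ℂ × ℂ => q.2.1) Ly p :=
  fun _ => hasFDerivAt_fst.comp _ hasFDerivAt_snd
lemma hu : ∀ p : ℂ × ℂ × ℂ, HasFDerivAt (fun q : ℂ × ℂ × ℂ => q.2.2) Lu p :=
  fun _ => hasFDerivAt_snd.comp _ hasFDerivAt_snd

lemma he1 (p : ℂ × ℂ × ℂ) :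
    HasFDerivAt e1 ((0 : ℂ × ℂ × ℂ →L[ℂ] ℂ).prod ((((-2⁻¹ : ℂ) • Lx)).prod Ly)) p := by
  have h2 : HasFDerivAt (fun q : ℂ × ℂ × ℂ => -q.1 / 2) ((-2⁻¹ : ℂ) • Lx) p := by
    have heq : (fun q : ℂ × ℂ × ℂ => -q.1 / 2) = fun q => (-2⁻¹ : ℂ) * q.1 := by
      funext q; ring
    rw [heq]
    exact (hx p).const_mul _
  exact HasFDerivAt.prodMk (hasFDerivAt_const (1:ℂ) p) (HasFDerivAt.prodMk h2 (hy p))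

lemma he2 (p : ℂ × ℂ × ℂ) :
    HasFDerivAt e2 ((0 : ℂ × ℂ × ℂ →L[ℂ] ℂ).prod ((0 : ℂ × ℂ × ℂ →L[ℂ] ℂ).prod Lx)) p :=
  HasFDerivAt.prodMk (hasFDerivAt_const (0:ℂ) p) (HasFDerivAt.prodMk (hasFDerivAt_const (1:ℂ) p) (hx p))

lemma he3 (p : ℂ × ℂ × ℂ) :
    HasFDerivAt e3 (Lx.prod (((2:ℂ) • Ly).prod ((3:ℂ) • Lu))) p := by
  have h2 : HasFDerivAt (fun q : ℂ × ℂ × ℂ => 2 * q.2.1) ((2:ℂ) • Ly) p :=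
    (hy p).const_mul 2
  have h3 : HasFDerivAt (fun q : ℂ × ℂ × ℂ => 3 * q.2.2) ((3:ℂ) • Lu) p :=
    (hu p).const_mul 3
  exact HasFDerivAt.prodMk (hx p) (HasFDerivAt.prodMk h2 h3)

theorem cayley_cubic_symmetries :
    lieBracket e1 e2 = 0 ∧
    lieBracket e1 e3 = e1 ∧
    (lieBracket e2 e3 = fun p => (2 : ℂ) • e2 p) ∧
    tangentToCayley e1 ∧ tangentToCayley e2 ∧ tangentToCayley e3 := by
  have f1 : ∀ p, fderiv ℂ e1 p = _ := fun p => (he1 p).fderiv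
  have f2 : ∀ p, fderiv ℂ e2 p = _ := fun p => (he2 p).fderiv
  have f3 : ∀ p, fderiv ℂ e3 p = _ := fun p => (he3 p).fderiv
  refine ⟨?_, ?_, ?_, ?_, ?_, ?_⟩
  · funext p
    simp [lieBracket, f1, f2, e1, e2, Lx, Ly, Lu, Prod.ext_iff]
  · funext p
    simp [lieBracket, f1, f3, e1, e3, Lx, Ly, Lu, Prod.ext_iff]
    constructor <;> ring
  · funext p
    simp [lieBracket, f2, f3, e2, e3, Lx, Ly, Lu, Prod.ext_iff]
    ring
  · intro p h; simp [e1]; ring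
  · intro p h; simp [e2]
  · intro p h; simp [e3, h]; ring
end
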